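/- Let σ be a permutation of Z_2^γ × Z_4^δ̇ such that for every affine function f : Z_2^γ × Z_4^δ̇ → Z_4, the composition f ∘ σ^{-1} is also affine. Then σ itself is an affine permutation, i.e., the map x ↦ σ(x) - σ(0) is a group automorphism of Z_2^γ × Z_4^δ̇. -/
import Mathlib


def IsAffine {G : Type*} [AddCommGroup G] (f : G → ZMod 4) : Prop :=
  ∀ x y : G, f 0 - f x - f y + f (x + y) = 0

/-- The injective additive hom `ZMod 2 →+ ZMod 4`, `x ↦ 2x`. -/
def hom24 : ZMod 2 →+ ZMod 4 :=
  ZMod.lift 2 ⟨zmultiplesHom (ZMod 4) (2 : ZMod 4), by decide⟩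

lemma hom24_eq_zero_iff (x : ZMod 2) : hom24 x = 0 ↔ x = 0 := by
  revert x; decide

lemma sep_points (γ δ : ℕ) (g : (Fin γ → ZMod 2) × (Fin δ → ZMod 4))
    (h : ∀ φ : ((Fin γ → ZMod 2) × (Fin δ → ZMod 4)) →+ ZMod 4, φ g = 0) :
    g = 0 := by
  have h1 : ∀ i, g.1 i = 0 := by
    intro i
    have := h (hom24.comp ((Pi.evalAddMonoidHom _ i).comp (AddMonoidHom.fst _ _)))
    simp only [AddMonoidHom.coe_comp, Function.comp_apply, AddMonoidHom.coe_fst,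
      Pi.evalAddMonoidHom_apply] at this
    exact (hom24_eq_zero_iff _).mp this
  have h2 : ∀ j, g.2 j = 0 := by
    intro j
    have := h ((Pi.evalAddMonoidHom _ j).comp (AddMonoidHom.snd _ _))
    simpa using this
  exact Prod.ext (funext h1) (funext h2)

lemma hom_isAffine {G : Type*} [AddCommGroup G] (φ : G →+ ZMod 4) :
    IsAffine φ := by
  intro x y
  simp [map_add]

theorem stmt15 (γ δ : ℕ)
    (σ : Equiv.Perm ((Fin γ → ZMod 2) × (Fin δ → ZMod 4)))
    (hσ : ∀ f : (Fin γ → ZMod 2) × (Fin δ → ZMod 4) → ZMod 4,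
      IsAffine f → IsAffine (f ∘ σ.symm)) :
    ∃ e : ((Fin γ → ZMod 2) × (Fin δ → ZMod 4)) ≃+
          ((Fin γ → ZMod 2) × (Fin δ → ZMod 4)),
      ∀ x, σ x - σ 0 = e x := by
  -- key: σ.symm is affine
  have key : ∀ a b, σ.symm 0 - σ.symm a - σ.symm b + σ.symm (a + b) = 0 := by
    intro a b
    apply sep_points
    intro φ
    have := hσ φ (hom_isAffine φ) a b
    simpa [map_add, map_sub] using this
  have map_add' : ∀ x y, (σ.symm (x + y) - σ.symm 0)
      = (σ.symm x - σ.symm 0) + (σ.symm y - σ.symm 0) := by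
    intro x y
    have h0 : σ.symm (x + y) - (σ.symm x + σ.symm y - σ.symm 0) = 0 := by
      have k := key x y
      abel_nf at k ⊢
      exact k
    have h' : σ.symm (x + y) = σ.symm x + σ.symm y - σ.symm 0 := sub_eq_zero.mp h0
    rw [h']
    abel
  let e' : ((Fin γ → ZMod 2) × (Fin δ → ZMod 4)) ≃+
      ((Fin γ → ZMod 2) × (Fin δ → ZMod 4)) :=
    { toEquiv := σ.symm.trans (Equiv.subRight (σ.symm 0))
      map_add' := by
        intro x y
        simpa [Equiv.subRight] using map_add' x y }
  refine ⟨e'.symm, fun x => ?_⟩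
  rw [eq_comm, AddEquiv.symm_apply_eq]
  rw [map_sub e']
  have h : (σ.symm (σ x) - σ.symm 0) - (σ.symm (σ 0) - σ.symm 0) = x := by simp
  exact h.symm
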